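/- For any real numbers x and y with 1 ≤ y ≤ x, ∑_{n≤x} ω(n) = ∑_{p≤y} ⌊x/p⌋ + ∑_{n≤x/y} π(x/n) − ⌊x/y⌋·π(y), where the first sum on the right runs over primes p ≤ y. -/

import Mathlib

/-!
Counting the pairs `(p, n)` with `p` prime and `p ∣ n ≤ x` gives `∑_{n ≤ x} ω(n) = ∑_{p ≤ x} ⌊x/p⌋`.
Split this at `y`. For `p > y`, `⌊x/p⌋` counts the `m ≥ 1` with `p m ≤ x`, all of which satisfy
`m ≤ x/y`; summing over `m` first turns the tail into `∑_{m ≤ x/y} (π(x/m) - π(y))`.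
-/

open Real Filter Finset

/-- The number of distinct prime divisors of `n`, usually denoted `ω(n)`. -/
def smallOmega (n : ℕ) : ℕ := n.primeFactors.card

/-- The total number of prime divisors of `n` counted with multiplicity, `Ω(n)`. -/
def bigOmega (n : ℕ) : ℕ := n.primeFactorsList.length

/-- The Meissel–Mertens constant `M = γ + ∑_p (log(1 - 1/p) + 1/p)`. -/
noncomputable def mertensM : ℝ :=
  Real.eulerMascheroniConstant +
    ∑' p : Nat.Primes, (Real.log (1 - 1 / ((p : ℕ) : ℝ)) + 1 / ((p : ℕ) : ℝ))

/-- The constant `M'' = ∑_p 1/(p(p-1))`. -/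
noncomputable def mertensM'' : ℝ :=
  ∑' p : Nat.Primes, 1 / (((p : ℕ) : ℝ) * (((p : ℕ) : ℝ) - 1))

/-- The constant `M' = M + M''`. -/
noncomputable def mertensM' : ℝ := mertensM + mertensM''

/-- The prime counting function `π(x)` for a real argument. -/
noncomputable def primePi (x : ℝ) : ℕ := Nat.primeCounting ⌊x⌋₊

/-- The logarithmic integral `li(x) = ∫_0^x dt / log t`, as a Cauchy principal value. -/
noncomputable def li (x : ℝ) : ℝ :=
  limUnder (nhdsWithin (0 : ℝ) (Set.Ioi 0)) (fun ε : ℝ =>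
    (∫ t in (0 : ℝ)..(1 - ε), 1 / Real.log t) + ∫ t in (1 + ε : ℝ)..x, 1 / Real.log t)

/-- The coefficients `a_j = -∫_1^∞ ({t}/t²) (log t)^{j-1} dt`. -/
noncomputable def aCoeff (j : ℕ) : ℝ :=
  -∫ t in Set.Ioi (1 : ℝ), Int.fract t / t ^ 2 * Real.log t ^ (j - 1)

namespace Nat

lemma sum_card_primeFactors_Ioc (N : ℕ) :
    ∑ n ∈ Ioc 0 N, #n.primeFactors = ∑ p ∈ primesLE N, N / p := by
  simp_rw [← Ioc_filter_dvd_card_eq_div N, card_eq_sum_ones]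
  apply sum_comm'
  intro n p
  simp only [mem_Ioc, mem_primeFactors, mem_filter, primesLE_eq_filter_Ioc_zero]
  constructor
  · rintro ⟨⟨hn, hnN⟩, hp, hpn, -⟩
    exact ⟨⟨⟨hn, hnN⟩, hpn⟩, ⟨hp.pos, (le_of_dvd hn hpn).trans hnN⟩, hp⟩
  · rintro ⟨⟨hn, hpn⟩, -, hp⟩
    exact ⟨hn, hp, hpn, hn.1.ne'⟩

/-- Both sides count the pairs `(p, m)` with `Y < p`, `P p`, `1 ≤ m` and `p * m ≤ N`; any such `m`
is at most `N / (Y + 1)`, hence at most `K`. -/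
lemma sum_div_filter_Ioc_eq_sum_card (P : ℕ → Prop) [DecidablePred P] {N Y K : ℕ}
    (hK : N / (Y + 1) ≤ K) :
    ∑ p ∈ Ioc Y N with P p, N / p = ∑ m ∈ Icc 1 K, #{p ∈ Ioc Y (N / m) | P p} := by
  rw [← sum_congr rfl fun p _ ↦ (Nat.card_Icc 1 (N / p)).trans (Nat.add_sub_cancel _ _)]
  simp_rw [card_eq_sum_ones]
  apply sum_comm'
  intro p m
  simp only [mem_Ioc, mem_Icc, mem_filter]
  constructor
  · rintro ⟨⟨⟨hYp, -⟩, hP⟩, hm, hmp'⟩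
    have hmp : m * p ≤ N := (le_div_iff_mul_le (by omega)).1 hmp'
    refine ⟨⟨⟨hYp, (le_div_iff_mul_le hm).2 (by linarith)⟩, hP⟩, hm, hK.trans' ?_⟩
    exact (le_div_iff_mul_le Y.succ_pos).2 (hmp.trans' (Nat.mul_le_mul_left m hYp))
  · rintro ⟨⟨⟨hYp, hpm⟩, hP⟩, hm, -⟩
    have hpm' : p * m ≤ N := (le_div_iff_mul_le hm).1 hpm
    exact ⟨⟨⟨hYp, hpm.trans (Nat.div_le_self N m)⟩, hP⟩, hm,
      (le_div_iff_mul_le (by omega)).2 (by linarith)⟩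

lemma card_filter_prime_Ioc_add_primeCounting {a b : ℕ} (h : a ≤ b) :
    #{p ∈ Ioc a b | p.Prime} + primeCounting a = primeCounting b := by
  rw [← primesLE_card_eq_primeCounting, ← primesLE_card_eq_primeCounting,
    primesLE_eq_filter_Ioc_zero, primesLE_eq_filter_Ioc_zero,
    ← Ioc_union_Ioc_eq_Ioc (Nat.zero_le a) h, filter_union, card_union_of_disjoint, add_comm]
  exact disjoint_filter_filter (Ioc_disjoint_Ioc_of_le le_rfl)

lemma sum_card_primeFactors_Ioc_add_mul_primeCounting {N Y K : ℕ} (hYN : Y ≤ N)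
    (hK : N / (Y + 1) ≤ K) (hKY : K * Y ≤ N) :
    ∑ n ∈ Ioc 0 N, #n.primeFactors + K * primeCounting Y =
      ∑ p ∈ primesLE Y, N / p + ∑ m ∈ Icc 1 K, primeCounting (N / m) := by
  have hsplit : ∑ p ∈ primesLE N, N / p =
      ∑ p ∈ primesLE Y, N / p + ∑ p ∈ Ioc Y N with p.Prime, N / p := by
    simp only [primesLE_eq_filter_Ioc_zero, sum_filter]
    exact (sum_Ioc_consecutive _ (Nat.zero_le Y) hYN).symm
  have hcount : ∀ m ∈ Icc 1 K,
      #{p ∈ Ioc Y (N / m) | p.Prime} + primeCounting Y = primeCounting (N / m) := by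
    intro m hm
    obtain ⟨hm1, hmK⟩ := mem_Icc.1 hm
    refine card_filter_prime_Ioc_add_primeCounting ((le_div_iff_mul_le hm1).2 ?_)
    exact hKY.trans' (by nlinarith)
  rw [sum_card_primeFactors_Ioc, hsplit, sum_div_filter_Ioc_eq_sum_card _ hK, add_assoc,
    ← sum_congr rfl hcount, sum_add_distrib, sum_const, Nat.card_Icc, Nat.add_sub_cancel,
    smul_eq_mul]

lemma floor_div_floor_add_one_le_floor_div {x y : ℝ} (hx : 0 ≤ x) (hy : 0 < y) :
    ⌊x⌋₊ / (⌊y⌋₊ + 1) ≤ ⌊x / y⌋₊ := by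
  rw [← Nat.floor_div_natCast]
  refine Nat.floor_le_floor (div_le_div_of_nonneg_left hx hy ?_)
  exact_mod_cast (Nat.lt_floor_add_one y).le

lemma floor_div_mul_floor_le_floor {x y : ℝ} (hx : 0 ≤ x) (hy : 0 < y) :
    ⌊x / y⌋₊ * ⌊y⌋₊ ≤ ⌊x⌋₊ := by
  refine Nat.le_floor ?_
  push_cast
  calc (⌊x / y⌋₊ : ℝ) * ⌊y⌋₊ ≤ x / y * y := by
        gcongr
        · exact Nat.floor_le (by positivity)
        · exact Nat.floor_le hy.le
    _ = x := div_mul_cancel₀ x hy.ne'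

end Nat

theorem sum_omega_hyperbola (x y : ℝ) (hy : 1 ≤ y) (hyx : y ≤ x) :
    (∑ n ∈ Finset.Icc 1 ⌊x⌋₊, (smallOmega n : ℝ)) =
      (∑ p ∈ Finset.filter Nat.Prime (Finset.Icc 1 ⌊y⌋₊), (⌊x / (p : ℝ)⌋₊ : ℝ)) +
        (∑ n ∈ Finset.Icc 1 ⌊x / y⌋₊, (primePi (x / (n : ℝ)) : ℝ)) -
        (⌊x / y⌋₊ : ℝ) * (primePi y : ℝ) := by
  have hy0 : 0 < y := by linarith
  have hx0 : 0 ≤ x := by linarith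
  have key := Nat.sum_card_primeFactors_Ioc_add_mul_primeCounting (Nat.floor_le_floor hyx)
    (Nat.floor_div_floor_add_one_le_floor_div hx0 hy0) (Nat.floor_div_mul_floor_le_floor hx0 hy0)
  rw [eq_sub_iff_add_eq, ← Nat.primesLE_eq_filter_Icc_one,
    show Icc 1 ⌊x⌋₊ = Ioc 0 ⌊x⌋₊ from Icc_add_one_left_eq_Ioc 0 _]
  simp only [smallOmega, primePi, Nat.floor_div_natCast]
  exact_mod_cast key
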